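/- The duty-cycle optimization max over (τ_c, τ_d) of τ_d/(τ_c + τ_d + τ₃ + τ₂) subject to τ_c ≤ 1/(c − β) and τ_c ≥ a + b·τ_d (with constants a ≥ 0, b > 0, and assuming 1/(c−β) ≥ a) is attained at τ_c* = 1/(c − β) and τ_d* = (1/(c−β) − a)/b, i.e., it is optimal to fully charge the battery. -/
import Mathlib


/-- The duty-cycle optimization `max τ_d/(τ_c + τ_d + τ₃ + τ₂)` subject
to `τ_c ≤ 1/(c - β)` and `τ_c ≥ a + b τ_d` (with `a ≥ 0`, `b > 0`, `1/(c-β) ≥ a`) is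
attained at `τ_c* = 1/(c - β)` and `τ_d* = (1/(c-β) - a)/b`: fully charging is
optimal. -/
theorem stmt_8 (c β τ₂ τ₃ a b : ℝ) (hc : β < c) (hβ : 0 < β)
    (hτ₂ : 0 < τ₂) (hτ₃ : 0 < τ₃) (ha : 0 ≤ a) (hb : 0 < b)
    (hfeas : a ≤ 1 / (c - β)) :
    (a + b * ((1 / (c - β) - a) / b) ≤ 1 / (c - β) ∧
      0 ≤ (1 / (c - β) - a) / b) ∧
    ∀ τc τd : ℝ, 0 ≤ τd → a + b * τd ≤ τc → τc ≤ 1 / (c - β) →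
      τd / (τc + τd + τ₃ + τ₂) ≤
        ((1 / (c - β) - a) / b) /
          (1 / (c - β) + (1 / (c - β) - a) / b + τ₃ + τ₂) := by
  set M := 1 / (c - β) with hM
  have hMpos : 0 < M := div_pos one_pos (by linarith)
  have hbne : b ≠ 0 := ne_of_gt hb
  have hstar : 0 ≤ (M - a) / b := div_nonneg (by linarith) hb.le
  constructor
  · constructor
    · rw [mul_div_cancel₀ _ hbne]; linarith
    · exact hstar
  · intro τc τd hτd h1 h2
    have hτc : 0 ≤ τc := by nlinarith
    have hden1 : 0 < τc + τd + τ₃ + τ₂ := by linarith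
    have hden2 : 0 < M + (M - a) / b + τ₃ + τ₂ := by
      have := hstar; linarith
    rw [div_le_div_iff₀ hden1 hden2]
    have hds : τd ≤ (M - a) / b := by
      rw [le_div_iff₀ hb]; nlinarith
    have hkey : τd * M ≤ (M - a) / b * τc := by
      rw [div_mul_eq_mul_div, le_div_iff₀ hb]
      nlinarith
    nlinarith [mul_nonneg hτd hstar]
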